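/- arXiv:2304.05267 — 2 statements merged into one kernel-verified Lean document; each statement's English description precedes it below -/
import Mathlib

section
/- Let Γ be a simple graph and let g be an element of the right-angled Artin group A(Γ). Any two graphically reduced words over V(Γ) ⊔ V(Γ)⁻¹ representing g differ only by finitely many shufflings, i.e. they are related by the equivalence relation generated by shufflings. -/
open Relation

universe u

/-- The defining relators of the right-angled Artin group of a simple graph. -/
def raagRels {V : Type u} (Γ : SimpleGraph V) : Set (FreeGroup V) :=
  {r | ∃ u v : V, Γ.Adj u v ∧
    r = FreeGroup.of u * FreeGroup.of v * (FreeGroup.of u)⁻¹ * (FreeGroup.of v)⁻¹}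

/-- The right-angled Artin group of a simple graph. -/
abbrev RAAG {V : Type u} (Γ : SimpleGraph V) : Type u := PresentedGroup (raagRels Γ)

/-- The generator of `RAAG Γ` corresponding to a vertex. -/
def raagGen {V : Type u} (Γ : SimpleGraph V) (u : V) : RAAG Γ :=
  PresentedGroup.of (rels := raagRels Γ) u

/-- The element of `RAAG Γ` represented by a word over `V(Γ) ⊔ V(Γ)⁻¹`. -/
def wordProd {V : Type u} (Γ : SimpleGraph V) (w : List (V × Bool)) : RAAG Γ :=
  (w.map fun p => if p.2 then raagGen Γ p.1 else (raagGen Γ p.1)⁻¹).prod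

/-- A shuffling swaps two consecutive letters whose vertices are adjacent. -/
def Shuffle {V : Type u} (Γ : SimpleGraph V) (w w' : List (V × Bool)) : Prop :=
  ∃ (l₁ l₂ : List (V × Bool)) (a b : V × Bool),
    Γ.Adj a.1 b.1 ∧ w = l₁ ++ a :: b :: l₂ ∧ w' = l₁ ++ b :: a :: l₂

/-- A free reduction deletes a consecutive pair of letters `u^ε u^(-ε)`. -/
def FreeRed {V : Type u} (_Γ : SimpleGraph V) (w w' : List (V × Bool)) : Prop :=
  ∃ (l₁ l₂ : List (V × Bool)) (u : V) (b : Bool),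
    w = l₁ ++ (u, b) :: (u, !b) :: l₂ ∧ w' = l₁ ++ l₂

/-- A word is graphically reduced if it cannot be shortened by finitely many
shufflings and free reductions. -/
def GraphReduced {V : Type u} (Γ : SimpleGraph V) (w : List (V × Bool)) : Prop :=
  ¬ ∃ w' : List (V × Bool),
    ReflTransGen (fun x y => Shuffle Γ x y ∨ FreeRed Γ x y) w w' ∧ w'.length < w.length

namespace RaagAux

variable {V : Type u} (Γ : SimpleGraph V)

/-- Inverse of a letter. -/
def linv (a : V × Bool) : V × Bool := (a.1, !a.2)

@[simp] lemma linv_linv (a : V × Bool) : linv (linv a) = a := by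
  cases a; simp [linv]

@[simp] lemma linv_fst (a : V × Bool) : (linv a).1 = a.1 := rfl

def adjAll (u : V) (l : List (V × Bool)) : Prop := ∀ x ∈ l, Γ.Adj u x.1

/-- `c` is accessible from the top of the pile `t`. -/
def Acc' (c : V × Bool) (t : List (V × Bool)) : Prop :=
  ∃ t₁ t₂, t = t₁ ++ c :: t₂ ∧ adjAll Γ c.1 t₁

def Cancel (w : List (V × Bool)) : Prop :=
  ∃ (l₁ l₂ l₃ : List (V × Bool)) (u : V) (b : Bool),
    w = l₁ ++ (u, b) :: l₂ ++ (u, !b) :: l₃ ∧ adjAll Γ u l₂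

def LocRed (w : List (V × Bool)) : Prop := ¬ Cancel Γ w

lemma acc_nil (c : V × Bool) : ¬ Acc' Γ c [] := by
  rintro ⟨t₁, t₂, h, -⟩
  cases t₁ <;> simp at h

lemma acc_cons {c x : V × Bool} {t : List (V × Bool)} :
    Acc' Γ c (x :: t) ↔ x = c ∨ (Γ.Adj c.1 x.1 ∧ Acc' Γ c t) := by
  constructor
  · rintro ⟨t₁, t₂, h, hadj⟩
    cases t₁ with
    | nil => simp at h; exact Or.inl h.1
    | cons z t₁' =>
      simp at h
      refine Or.inr ⟨h.1 ▸ hadj z (by simp), t₁', t₂, h.2, fun y hy => hadj y (by simp [hy])⟩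
  · rintro (rfl | ⟨hadj, t₁, t₂, rfl, hadj'⟩)
    · exact ⟨[], t, rfl, by simp [adjAll]⟩
    · exact ⟨x :: t₁, t₂, rfl, by
        intro y hy
        rcases List.mem_cons.mp hy with rfl | hy
        · exact hadj
        · exact hadj' y hy⟩

lemma cancel_cons_iff (x : V × Bool) (t : List (V × Bool)) :
    Cancel Γ (x :: t) ↔ Acc' Γ (linv x) t ∨ Cancel Γ t := by
  constructor
  · rintro ⟨l₁, l₂, l₃, u, b, h, hadj⟩
    cases l₁ with
    | nil =>
      simp at h
      refine Or.inl ⟨l₂, l₃, ?_, ?_⟩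
      · rw [h.2, h.1, linv]
      · rw [h.1, linv]; exact hadj
    | cons z l₁' =>
      simp at h
      exact Or.inr ⟨l₁', l₂, l₃, u, b, by rw [h.2]; simp, hadj⟩
  · rintro (⟨t₁, t₂, rfl, hadj⟩ | ⟨l₁, l₂, l₃, u, b, rfl, hadj⟩)
    · refine ⟨[], t₁, t₂, x.1, x.2, ?_, ?_⟩
      · simp [linv]
      · simpa [linv, adjAll] using hadj
    · exact ⟨x :: l₁, l₂, l₃, u, b, rfl, hadj⟩

lemma locred_nil : LocRed Γ ([] : List (V × Bool)) := by
  rintro ⟨l₁, l₂, l₃, u, b, h, -⟩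
  cases l₁ <;> simp at h

lemma locred_cons_iff {x : V × Bool} {t : List (V × Bool)} :
    LocRed Γ (x :: t) ↔ ¬ Acc' Γ (linv x) t ∧ LocRed Γ t := by
  rw [LocRed, cancel_cons_iff, not_or]; rfl

lemma locred_singleton (a : V × Bool) : LocRed Γ [a] := by
  rw [locred_cons_iff]
  exact ⟨acc_nil Γ _, locred_nil Γ⟩

lemma shuffle_symm {s s' : List (V × Bool)} (h : Shuffle Γ s s') : Shuffle Γ s' s := by
  obtain ⟨l₁, l₂, a, b, hab, h1, h2⟩ := h
  exact ⟨l₁, l₂, b, a, hab.symm, h2, h1⟩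

lemma shuffle_cons (z : V × Bool) {s s' : List (V × Bool)} (h : Shuffle Γ s s') :
    Shuffle Γ (z :: s) (z :: s') := by
  obtain ⟨l₁, l₂, a, b, hab, rfl, rfl⟩ := h
  exact ⟨z :: l₁, l₂, a, b, hab, rfl, rfl⟩

lemma shuffle_reverse {s s' : List (V × Bool)} (h : Shuffle Γ s s') :
    Shuffle Γ s.reverse s'.reverse := by
  obtain ⟨l₁, l₂, a, b, hab, rfl, rfl⟩ := h
  refine ⟨l₂.reverse, l₁.reverse, b, a, hab.symm, ?_, ?_⟩ <;> simp

/-- abbreviation for the class of a pile -/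
abbrev mkQ (s : List (V × Bool)) : Quot (Shuffle Γ) := Quot.mk _ s

lemma qswap {a b : V × Bool} (hab : Γ.Adj a.1 b.1) (l₁ l₂ : List (V × Bool)) :
    mkQ Γ (l₁ ++ a :: b :: l₂) = mkQ Γ (l₁ ++ b :: a :: l₂) :=
  Quot.sound ⟨l₁, l₂, a, b, hab, rfl, rfl⟩

lemma qswap' {a b : V × Bool} (hab : Γ.Adj a.1 b.1) (l₂ : List (V × Bool)) :
    mkQ Γ (a :: b :: l₂) = mkQ Γ (b :: a :: l₂) :=
  qswap Γ hab [] l₂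

lemma qcons (z : V × Bool) {s s' : List (V × Bool)} (h : mkQ Γ s = mkQ Γ s') :
    mkQ Γ (z :: s) = mkQ Γ (z :: s') := by
  have : ∀ q : Quot (Shuffle Γ), Quot (Shuffle Γ) :=
    fun q => Quot.lift (fun t => mkQ Γ (z :: t))
      (fun t t' ht => Quot.sound (shuffle_cons Γ z ht)) q
  exact congrArg (Quot.lift (fun t => mkQ Γ (z :: t))
      (fun t t' ht => Quot.sound (shuffle_cons Γ z ht))) h

open Classical in
/-- Push a letter onto a pile (head = most recent letter). -/
noncomputable def push (a : V × Bool) : List (V × Bool) → List (V × Bool)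
  | [] => [a]
  | x :: t => if x = linv a then t
      else if Γ.Adj a.1 x.1 then x :: push a t
      else a :: x :: t

@[simp] lemma push_nil (a : V × Bool) : push Γ a [] = [a] := by rw [push]

lemma push_cancel {a x : V × Bool} (t : List (V × Bool)) (h : x = linv a) :
    push Γ a (x :: t) = t := by rw [push, if_pos h]

lemma push_adj {a x : V × Bool} (t : List (V × Bool)) (h1 : x ≠ linv a)
    (h2 : Γ.Adj a.1 x.1) : push Γ a (x :: t) = x :: push Γ a t := by
  rw [push, if_neg h1, if_pos h2]

lemma push_stop {a x : V × Bool} (t : List (V × Bool)) (h1 : x ≠ linv a)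
    (h2 : ¬ Γ.Adj a.1 x.1) : push Γ a (x :: t) = a :: x :: t := by
  rw [push, if_neg h1, if_neg h2]

lemma push_of_not_acc {a : V × Bool} {t : List (V × Bool)} (h : ¬ Acc' Γ (linv a) t) :
    mkQ Γ (push Γ a t) = mkQ Γ (a :: t) := by
  induction t with
  | nil => simp
  | cons z t' ih =>
    by_cases hz : z = linv a
    · exact absurd ((acc_cons Γ).mpr (Or.inl hz)) h
    · by_cases hadj : Γ.Adj a.1 z.1
      · rw [push_adj Γ t' hz hadj]
        have h' : ¬ Acc' Γ (linv a) t' := fun hc =>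
          h ((acc_cons Γ).mpr (Or.inr ⟨by simpa using hadj, hc⟩))
        calc mkQ Γ (z :: push Γ a t') = mkQ Γ (z :: a :: t') := qcons Γ z (ih h')
          _ = mkQ Γ (a :: z :: t') := qswap' Γ hadj.symm t'
      · rw [push_stop Γ t' hz hadj]

lemma acc_push {a c : V × Bool} {t : List (V × Bool)} (hca : c ≠ a) (hadj : Γ.Adj a.1 c.1)
    (h : Acc' Γ c (push Γ a t)) : Acc' Γ c t := by
  induction t with
  | nil =>
    rw [push_nil] at h
    rcases (acc_cons Γ).mp h with he | ⟨-, h⟩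
    · exact absurd he.symm hca
    · exact absurd h (acc_nil Γ c)
  | cons z t' ih =>
    by_cases hz : z = linv a
    · rw [push_cancel Γ t' hz] at h
      refine (acc_cons Γ).mpr (Or.inr ⟨?_, h⟩)
      rw [hz]; simpa using hadj.symm
    · by_cases hadj' : Γ.Adj a.1 z.1
      · rw [push_adj Γ t' hz hadj'] at h
        rcases (acc_cons Γ).mp h with he | ⟨h1, h2⟩
        · exact (acc_cons Γ).mpr (Or.inl he)
        · exact (acc_cons Γ).mpr (Or.inr ⟨h1, ih h2⟩)
      · rw [push_stop Γ t' hz hadj'] at h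
        rcases (acc_cons Γ).mp h with he | ⟨-, h2⟩
        · exact absurd he.symm hca
        · exact h2

lemma locred_push (a : V × Bool) {t : List (V × Bool)} (h : LocRed Γ t) :
    LocRed Γ (push Γ a t) := by
  induction t with
  | nil => rw [push_nil]; exact locred_singleton Γ a
  | cons x t' ih =>
    obtain ⟨hacc, ht'⟩ := (locred_cons_iff Γ).mp h
    by_cases hx : x = linv a
    · rw [push_cancel Γ t' hx]; exact ht'
    · by_cases hadj : Γ.Adj a.1 x.1
      · rw [push_adj Γ t' hx hadj]
        refine (locred_cons_iff Γ).mpr ⟨?_, ih ht'⟩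
        intro hc
        have hne : linv x ≠ a := by
          intro he
          exact hx (by rw [← he, linv_linv])
        exact hacc (acc_push Γ hne (by simpa using hadj) hc)
      · rw [push_stop Γ t' hx hadj]
        refine (locred_cons_iff Γ).mpr ⟨?_, h⟩
        intro hc
        rcases (acc_cons Γ).mp hc with he | ⟨h1, -⟩
        · exact hx he
        · exact hadj (by simpa using h1)

lemma push_push_linv (a : V × Bool) {s : List (V × Bool)} (h : LocRed Γ s) :
    mkQ Γ (push Γ (linv a) (push Γ a s)) = mkQ Γ s := by
  induction s with
  | nil => rw [push_nil, push_cancel Γ [] (linv_linv a).symm]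
  | cons x t ih =>
    obtain ⟨hacc, ht⟩ := (locred_cons_iff Γ).mp h
    by_cases hx : x = linv a
    · rw [push_cancel Γ t hx]
      subst hx
      exact push_of_not_acc Γ hacc
    · by_cases hadj : Γ.Adj a.1 x.1
      · rw [push_adj Γ t hx hadj]
        have hxa : x ≠ linv (linv a) := by
          rw [linv_linv]; rintro rfl; exact Γ.loopless.irrefl _ hadj
        rw [push_adj Γ _ hxa (by simpa using hadj)]
        exact qcons Γ x (ih ht)
      · rw [push_stop Γ t hx hadj, push_cancel Γ (x :: t) (linv_linv a).symm]

lemma push_shuffle_core (a : V × Bool) (l₁ : List (V × Bool)) {x y : V × Bool}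
    (hxy : Γ.Adj x.1 y.1) (l₂ : List (V × Bool)) :
    mkQ Γ (push Γ a (l₁ ++ x :: y :: l₂)) = mkQ Γ (push Γ a (l₁ ++ y :: x :: l₂)) := by
  induction l₁ with
  | nil =>
    simp only [List.nil_append]
    by_cases hx : x = linv a
    · have hy : y ≠ linv a := by
        intro he
        have : x = y := hx.trans he.symm
        exact Γ.loopless.irrefl _ (this ▸ hxy)
      have hay : Γ.Adj a.1 y.1 := by rw [hx] at hxy; simpa using hxy
      rw [push_cancel Γ _ hx, push_adj Γ _ hy hay, push_cancel Γ _ hx]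
    · by_cases hy : y = linv a
      · have hax : Γ.Adj a.1 x.1 := by
          have h2 := hxy.symm; rw [hy] at h2; simpa using h2
        rw [push_adj Γ _ hx hax, push_cancel Γ _ hy, push_cancel Γ _ hy]
      · by_cases hax : Γ.Adj a.1 x.1 <;> by_cases hay : Γ.Adj a.1 y.1
        · rw [push_adj Γ _ hx hax, push_adj Γ _ hy hay, push_adj Γ _ hy hay,
            push_adj Γ _ hx hax]
          exact qswap' Γ hxy _
        · rw [push_adj Γ _ hx hax, push_stop Γ _ hy hay, push_stop Γ _ hy hay]
          calc mkQ Γ (x :: a :: y :: l₂) = mkQ Γ (a :: x :: y :: l₂) := qswap' Γ hax.symm _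
            _ = mkQ Γ (a :: y :: x :: l₂) := qcons Γ a (qswap' Γ hxy _)
        · rw [push_stop Γ _ hx hax, push_adj Γ _ hy hay, push_stop Γ _ hx hax]
          calc mkQ Γ (a :: x :: y :: l₂) = mkQ Γ (a :: y :: x :: l₂) :=
              qcons Γ a (qswap' Γ hxy _)
            _ = mkQ Γ (y :: a :: x :: l₂) := qswap' Γ hay _
        · rw [push_stop Γ _ hx hax, push_stop Γ _ hy hay]
          exact qcons Γ a (qswap' Γ hxy _)
  | cons z t ih =>
    simp only [List.cons_append]
    by_cases hz : z = linv a
    · rw [push_cancel Γ _ hz, push_cancel Γ _ hz]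
      exact qswap Γ hxy t l₂
    · by_cases hadj : Γ.Adj a.1 z.1
      · rw [push_adj Γ _ hz hadj, push_adj Γ _ hz hadj]
        exact qcons Γ z ih
      · rw [push_stop Γ _ hz hadj, push_stop Γ _ hz hadj]
        exact qswap Γ hxy (a :: z :: t) l₂

lemma push_shuffle (a : V × Bool) {s s' : List (V × Bool)} (h : Shuffle Γ s s') :
    mkQ Γ (push Γ a s) = mkQ Γ (push Γ a s') := by
  obtain ⟨l₁, l₂, x, y, hxy, rfl, rfl⟩ := h
  exact push_shuffle_core Γ a l₁ hxy l₂

lemma push_comm {a b : V × Bool} (hab : Γ.Adj a.1 b.1) (s : List (V × Bool)) :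
    mkQ Γ (push Γ a (push Γ b s)) = mkQ Γ (push Γ b (push Γ a s)) := by
  have hba := hab.symm
  have hanb : (b : V × Bool) ≠ linv a := by
    intro he
    have h1 : b.1 = a.1 := by rw [he, linv_fst]
    rw [h1] at hab
    exact Γ.loopless.irrefl _ hab
  have hbna : (a : V × Bool) ≠ linv b := by
    intro he
    have h1 : a.1 = b.1 := by rw [he, linv_fst]
    rw [h1] at hab
    exact Γ.loopless.irrefl _ hab
  induction s with
  | nil =>
    rw [push_nil, push_nil, push_adj Γ _ hanb hab, push_adj Γ _ hbna hba,
      push_nil, push_nil]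
    exact qswap' Γ hba _
  | cons x t ih =>
    by_cases hxa : x = linv a
    · have hadjbx : Γ.Adj b.1 x.1 := by rw [hxa]; simpa using hba
      have hxb : x ≠ linv b := by
        intro he
        have h1 : a.1 = b.1 := by
          have := hxa.symm.trans he
          exact (congrArg Prod.fst this : (linv a).1 = (linv b).1)
        rw [h1] at hab
        exact Γ.loopless.irrefl _ hab
      rw [push_adj Γ t hxb hadjbx, push_cancel Γ (push Γ b t) hxa,
        push_cancel Γ t hxa]
    · by_cases hxb : x = linv b
      · have hadjax : Γ.Adj a.1 x.1 := by rw [hxb]; simpa using hab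
        rw [push_cancel Γ t hxb, push_adj Γ t hxa hadjax,
          push_cancel Γ (push Γ a t) hxb]
      · by_cases hax : Γ.Adj a.1 x.1 <;> by_cases hbx : Γ.Adj b.1 x.1
        · rw [push_adj Γ t hxb hbx, push_adj Γ (push Γ b t) hxa hax,
            push_adj Γ t hxa hax, push_adj Γ (push Γ a t) hxb hbx]
          exact qcons Γ x ih
        · rw [push_stop Γ t hxb hbx, push_adj Γ (x :: t) hanb hab,
            push_adj Γ t hxa hax, push_stop Γ (push Γ a t) hxb hbx]
        · rw [push_adj Γ t hxb hbx, push_stop Γ (push Γ b t) hxa hax,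
            push_stop Γ t hxa hax, push_adj Γ (x :: t) hbna hba,
            push_adj Γ t hxb hbx]
        · rw [push_stop Γ t hxb hbx, push_adj Γ (x :: t) hanb hab,
            push_stop Γ t hxa hax, push_adj Γ (x :: t) hbna hba,
            push_stop Γ t hxb hbx]
          exact qswap' Γ hba _


def QS : Type u := {q : Quot (Shuffle Γ) // ∃ s, LocRed Γ s ∧ q = mkQ Γ s}

noncomputable def pushQ (a : V × Bool) : Quot (Shuffle Γ) → Quot (Shuffle Γ) :=
  Quot.lift (fun s => mkQ Γ (push Γ a s)) (fun _ _ h => push_shuffle Γ a h)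

@[simp] lemma pushQ_mk (a : V × Bool) (s : List (V × Bool)) :
    pushQ Γ a (mkQ Γ s) = mkQ Γ (push Γ a s) := rfl

noncomputable def pushS (a : V × Bool) (q : QS Γ) : QS Γ :=
  ⟨pushQ Γ a q.1, by
    obtain ⟨s, hs, he⟩ := q.2
    exact ⟨push Γ a s, locred_push Γ a hs, by rw [he, pushQ_mk]⟩⟩

lemma pushS_linv (a : V × Bool) (q : QS Γ) : pushS Γ (linv a) (pushS Γ a q) = q := by
  obtain ⟨q1, s, hs, he⟩ := q
  apply Subtype.ext
  show pushQ Γ (linv a) (pushQ Γ a q1) = q1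
  rw [he, pushQ_mk, pushQ_mk]
  exact push_push_linv Γ a hs

noncomputable def permS (a : V × Bool) : Equiv.Perm (QS Γ) :=
  ⟨pushS Γ a, pushS Γ (linv a), fun q => pushS_linv Γ a q, fun q => by
    have := pushS_linv Γ (linv a) q
    rwa [linv_linv] at this⟩

lemma permS_inv (a : V × Bool) : (permS Γ a)⁻¹ = permS Γ (linv a) :=
  Equiv.ext fun _ => rfl

lemma permS_comm {u v : V} (h : Γ.Adj u v) :
    permS Γ (u, true) * permS Γ (v, true) = permS Γ (v, true) * permS Γ (u, true) := by
  apply Equiv.ext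
  intro q
  apply Subtype.ext
  obtain ⟨q1, hq⟩ := q
  induction q1 using Quot.ind with
  | _ s => exact push_comm Γ (show Γ.Adj (u, true).1 (v, true).1 from h) s

noncomputable def toPermOp : RAAG Γ →* (Equiv.Perm (QS Γ))ᵐᵒᵖ :=
  PresentedGroup.toGroup (f := fun u => MulOpposite.op (permS Γ (u, true))) (by
    rintro r ⟨u, v, huv, rfl⟩
    simp only [map_mul, map_inv, FreeGroup.lift_apply_of]
    rw [← commutatorElement_def, commutatorElement_eq_one_iff_mul_comm,
      ← MulOpposite.op_mul, ← MulOpposite.op_mul, permS_comm Γ huv])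

lemma toPermOp_gen (u : V) :
    toPermOp Γ (raagGen Γ u) = MulOpposite.op (permS Γ (u, true)) :=
  PresentedGroup.toGroup.of _

noncomputable def emptyS : QS Γ := ⟨mkQ Γ [], [], locred_nil Γ, rfl⟩

lemma toPermOp_letter (a : V × Bool) :
    (toPermOp Γ (if a.2 then raagGen Γ a.1 else (raagGen Γ a.1)⁻¹)).unop = permS Γ a := by
  rcases a with ⟨u, b⟩
  cases b
  · simp only [Bool.false_eq_true, if_false]
    rw [map_inv, toPermOp_gen, MulOpposite.unop_inv, MulOpposite.unop_op, permS_inv]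
    rfl
  · simp only [if_true]
    rw [toPermOp_gen, MulOpposite.unop_op]

lemma eval_wordProd (w : List (V × Bool)) (h : LocRed Γ w.reverse) :
    ((toPermOp Γ (wordProd Γ w)).unop (emptyS Γ)).1 = mkQ Γ w.reverse := by
  induction w using List.reverseRecOn with
  | nil =>
    have h1 : wordProd Γ ([] : List (V × Bool)) = 1 := rfl
    rw [h1, map_one]
    rfl
  | append_singleton w a ih =>
    have h' : LocRed Γ (a :: w.reverse) := by simpa using h
    obtain ⟨hacc, hw⟩ := (locred_cons_iff Γ).mp h'
    have hprod : wordProd Γ (w ++ [a]) =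
        wordProd Γ w * (if a.2 then raagGen Γ a.1 else (raagGen Γ a.1)⁻¹) := by
      simp [wordProd]
    rw [hprod, map_mul, MulOpposite.unop_mul, Equiv.Perm.mul_apply, toPermOp_letter]
    calc (permS Γ a ((toPermOp Γ (wordProd Γ w)).unop (emptyS Γ))).1
        = pushQ Γ a ((toPermOp Γ (wordProd Γ w)).unop (emptyS Γ)).1 := rfl
      _ = pushQ Γ a (mkQ Γ w.reverse) := by rw [ih hw]
      _ = mkQ Γ (push Γ a w.reverse) := rfl
      _ = mkQ Γ (a :: w.reverse) := push_of_not_acc Γ hacc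
      _ = mkQ Γ (w ++ [a]).reverse := by simp

lemma cancel_of_cancel_reverse {w : List (V × Bool)} (h : Cancel Γ w.reverse) :
    Cancel Γ w := by
  obtain ⟨l₁, l₂, l₃, u, b, he, hadj⟩ := h
  refine ⟨l₃.reverse, l₂.reverse, l₁.reverse, u, !b, ?_, ?_⟩
  · have h2 := congrArg List.reverse he
    rw [List.reverse_reverse] at h2
    rw [h2]
    simp
  · intro x hx
    exact hadj x (by simpa using hx)

lemma shorten {u : V} {b : Bool} (l₂ : List (V × Bool)) (hadj : adjAll Γ u l₂)
    (l₁ l₃ : List (V × Bool)) :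
    ReflTransGen (fun x y => Shuffle Γ x y ∨ FreeRed Γ x y)
      (l₁ ++ ((u, b) :: (l₂ ++ ((u, !b) :: l₃)))) (l₁ ++ (l₂ ++ l₃)) := by
  induction l₂ generalizing l₁ with
  | nil =>
    exact ReflTransGen.single (Or.inr ⟨l₁, l₃, u, b, rfl, rfl⟩)
  | cons z l₂' ih =>
    have hz : Γ.Adj u z.1 := hadj z (by simp)
    have step1 : Shuffle Γ (l₁ ++ ((u, b) :: (z :: (l₂' ++ ((u, !b) :: l₃)))))
        (l₁ ++ (z :: ((u, b) :: (l₂' ++ ((u, !b) :: l₃))))) :=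
      ⟨l₁, l₂' ++ ((u, !b) :: l₃), (u, b), z, hz, rfl, rfl⟩
    refine ReflTransGen.head (Or.inl step1) ?_
    have h2 := ih (fun x hx => hadj x (by simp [hx])) (l₁ ++ [z])
    simpa [List.append_assoc] using h2

lemma locred_reverse_of_graphReduced {w : List (V × Bool)} (h : GraphReduced Γ w) :
    LocRed Γ w.reverse := by
  intro hc
  obtain ⟨l₁, l₂, l₃, u, b, hw, hadj⟩ := cancel_of_cancel_reverse Γ hc
  refine h ⟨l₁ ++ (l₂ ++ l₃), ?_, ?_⟩
  · have hw2 : w = l₁ ++ ((u, b) :: (l₂ ++ ((u, !b) :: l₃))) := by rw [hw]; simp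
    rw [hw2]
    exact shorten Γ l₂ hadj l₁ l₃
  · rw [hw]
    simp

lemma eqvGen_map {α β : Type*} {r : α → α → Prop} {p : β → β → Prop} (f : α → β)
    (hf : ∀ a b, r a b → p (f a) (f b)) {a b : α} (h : EqvGen r a b) :
    EqvGen p (f a) (f b) := by
  induction h with
  | rel x y hxy => exact EqvGen.rel _ _ (hf _ _ hxy)
  | refl x => exact EqvGen.refl _
  | symm x y _ ih => exact EqvGen.symm _ _ ih
  | trans x y z _ _ ih1 ih2 => exact EqvGen.trans _ _ _ ih1 ih2

end RaagAux

/-- Any two graphically reduced words representing the same element of `A(Γ)` differ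
only by finitely many shufflings. -/
theorem graphReduced_words_eqvGen_shuffle {V : Type u} (Γ : SimpleGraph V) (g : RAAG Γ)
    (w w' : List (V × Bool)) (hw : wordProd Γ w = g) (hw' : wordProd Γ w' = g)
    (hred : GraphReduced Γ w) (hred' : GraphReduced Γ w') :
    Relation.EqvGen (Shuffle Γ) w w' := by
  have h1 := RaagAux.locred_reverse_of_graphReduced Γ hred
  have h2 := RaagAux.locred_reverse_of_graphReduced Γ hred'
  have e1 := RaagAux.eval_wordProd Γ w h1
  have e2 := RaagAux.eval_wordProd Γ w' h2
  rw [hw] at e1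
  rw [hw'] at e2
  have hq : RaagAux.mkQ Γ w.reverse = RaagAux.mkQ Γ w'.reverse := by rw [← e1, ← e2]
  have h3 : Relation.EqvGen (Shuffle Γ) w.reverse w'.reverse := Quot.eqvGen_exact hq
  have h4 := RaagAux.eqvGen_map List.reverse
    (fun a b hab => RaagAux.shuffle_reverse Γ hab) h3
  simpa using h4
end

section
/- Let Γ be a simple graph. The right-angled Artin group A(Γ) is torsion-free: every non-trivial element has infinite order. -/
universe u

open HNNExtension HNNExtension.NormalWord

namespace RaagAux

variable {G : Type*} [Group G] {A B : Subgroup G} (φ : A ≃* B)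

/-- The letter-relation for reduced words in HNN extensions. -/
abbrev Rel (A B : Subgroup G) : (ℤˣ × G) → (ℤˣ × G) → Prop :=
  fun a b => a.2 ∈ toSubgroup A B a.1 → a.1 = b.1

/-- Multiply the last letter of a word by `x`. -/
def mulLast (x : G) : List (ℤˣ × G) → List (ℤˣ × G)
  | [] => []
  | [a] => [(a.1, a.2 * x)]
  | a :: b :: l => a :: mulLast x (b :: l)

@[simp] theorem mulLast_nil (x : G) : mulLast x [] = [] := rfl

theorem mulLast_one : ∀ (L : List (ℤˣ × G)), mulLast 1 L = L
  | [] => rfl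
  | [a] => by simp [mulLast]
  | a :: b :: l => by rw [mulLast, mulLast_one (b :: l)]

theorem length_mulLast (x : G) : ∀ (L : List (ℤˣ × G)), (mulLast x L).length = L.length
  | [] => rfl
  | [a] => rfl
  | a :: b :: l => by rw [mulLast, List.length_cons, length_mulLast x (b :: l)]; rfl

theorem mulLast_ne_nil (x : G) {L : List (ℤˣ × G)} (h : L ≠ []) : mulLast x L ≠ [] := by
  intro hc
  apply h
  have := length_mulLast x L
  rw [hc] at this
  simpa using (List.length_eq_zero_iff.1 this.symm)

theorem head_fst_mulLast (x : G) : ∀ (L : List (ℤˣ × G)) (h : L ≠ []) (h' : mulLast x L ≠ []),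
    ((mulLast x L).head h').1 = (L.head h).1
  | [] , h, _ => absurd rfl h
  | [a], _, _ => rfl
  | a :: b :: l, _, _ => rfl

theorem chain'_mulLast (x : G) : ∀ (L : List (ℤˣ × G)), L.Chain' (Rel A B) →
    (mulLast x L).Chain' (Rel A B)
  | [] , _ => List.isChain_nil
  | [a], _ => List.isChain_singleton _
  | a :: b :: l, h => by
    rw [mulLast]
    rcases List.isChain_cons_cons.1 h with ⟨hab, hbl⟩
    refine List.isChain_cons.2 ⟨?_, chain'_mulLast x (b :: l) hbl⟩
    intro y hy hmem
    have hne : (b :: l) ≠ [] := by simp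
    have hy' : (mulLast x (b :: l)).head (mulLast_ne_nil x hne) = y := by
      rw [List.head?_eq_head (mulLast_ne_nil x hne)] at hy
      exact Option.some_inj.1 hy
    have h1 : y.1 = b.1 := hy' ▸ head_fst_mulLast x (b :: l) hne _
    exact h1 ▸ hab hmem

/-- The element of the HNN extension represented by a single letter. -/
noncomputable def letter (p : ℤˣ × G) : HNNExtension G A B φ :=
  t ^ (p.1 : ℤ) * of p.2

/-- The element of the HNN extension represented by a list of letters. -/
noncomputable def listProd (L : List (ℤˣ × G)) : HNNExtension G A B φ :=
  (L.map (letter φ)).prod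

@[simp] theorem listProd_nil : listProd φ ([] : List (ℤˣ × G)) = 1 := rfl

@[simp] theorem listProd_cons (a : ℤˣ × G) (L : List (ℤˣ × G)) :
    listProd φ (a :: L) = letter φ a * listProd φ L := by
  simp [listProd]

@[simp] theorem listProd_append (L₁ L₂ : List (ℤˣ × G)) :
    listProd φ (L₁ ++ L₂) = listProd φ L₁ * listProd φ L₂ := by
  simp [listProd]

theorem prod_eq_listProd (w : ReducedWord G A B) :
    w.prod φ = of w.head * listProd φ w.toList := rfl

theorem listProd_mulLast (x : G) : ∀ (L : List (ℤˣ × G)), L ≠ [] →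
    listProd φ (mulLast x L) = listProd φ L * of x
  | [], h => absurd rfl h
  | [a], _ => by simp [mulLast, letter, map_mul, mul_assoc]
  | a :: b :: l, _ => by
    rw [mulLast, listProd_cons, listProd_cons,
      listProd_mulLast x (b :: l) (by simp), mul_assoc]

theorem t_zpow_mul_of (u : ℤˣ) (a : toSubgroup A B u) :
    (t ^ (u : ℤ) * of (a : G) : HNNExtension G A B φ) =
      of (toSubgroupEquiv φ u a : G) * t ^ (u : ℤ) := by
  rcases Int.units_eq_one_or u with rfl | rfl
  · simp; exact t_mul_of (φ := φ) a
  · simp; exact inv_t_mul_of (φ := φ) a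

/-- A reduced word is cyclically reduced if the last letter (with the head absorbed
into it) does not pinch with the first letter. -/
def IsCyclicallyReduced (w : ReducedWord G A B) : Prop :=
  ∀ a ∈ (mulLast w.head w.toList).getLast?, ∀ b ∈ (mulLast w.head w.toList).head?,
    Rel A B a b

theorem isCyclicallyReduced_of_nil (w : ReducedWord G A B) (h : w.toList = []) :
    IsCyclicallyReduced w := by
  intro a ha
  rw [h] at ha
  simp [mulLast] at ha

theorem chain'_join_replicate {L : List (ℤˣ × G)} (hL : L.Chain' (Rel A B))
    (hwrap : ∀ a ∈ L.getLast?, ∀ b ∈ L.head?, Rel A B a b) (hne : L ≠ []) :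
    ∀ n : ℕ, ((List.replicate n L).flatten).Chain' (Rel A B) ∧
      (0 < n → ((List.replicate n L).flatten).head? = L.head?)
  | 0 => ⟨List.isChain_nil, by simp⟩
  | (n+1) => by
    have ih := chain'_join_replicate hL hwrap hne n
    rw [List.replicate_succ]
    have hj : (L :: List.replicate n L).flatten = L ++ (List.replicate n L).flatten := rfl
    rw [hj]
    constructor
    · apply List.isChain_append.2
      refine ⟨hL, ih.1, ?_⟩
      intro a ha b hb
      rcases Nat.eq_zero_or_pos n with rfl | hn
      · simp at hb
      · rw [ih.2 hn] at hb
        exact hwrap a ha b hb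
    · intro _
      rw [List.head?_append_of_ne_nil _ hne]

theorem listProd_join_replicate (L : List (ℤˣ × G)) :
    ∀ n : ℕ, listProd φ ((List.replicate n L).flatten) = (listProd φ L) ^ n
  | 0 => by simp
  | (n+1) => by
    rw [List.replicate_succ]
    have hj : (L :: List.replicate n L).flatten = L ++ (List.replicate n L).flatten := rfl
    rw [hj, listProd_append, listProd_join_replicate L n, pow_succ']

theorem pow_ne_one_of_isCyclicallyReduced (w : ReducedWord G A B)
    (hcyc : IsCyclicallyReduced w) (hne : w.toList ≠ []) {n : ℕ} (hn : n ≠ 0) :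
    (w.prod φ) ^ n ≠ 1 := by
  intro h1
  have hch : (mulLast w.head w.toList).Chain' (Rel A B) := chain'_mulLast _ _ w.chain
  have hne' : mulLast w.head w.toList ≠ [] := mulLast_ne_nil _ hne
  obtain ⟨hchain, -⟩ := chain'_join_replicate hch hcyc hne' n
  let W : ReducedWord G A B := ⟨1, (List.replicate n (mulLast w.head w.toList)).flatten, hchain⟩
  have hz : listProd φ (mulLast w.head w.toList) = listProd φ w.toList * of w.head :=
    listProd_mulLast φ _ _ hne
  have hWprod : W.prod φ = (listProd φ w.toList * of w.head) ^ n := by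
    rw [prod_eq_listProd]
    show of (1 : G) * listProd φ ((List.replicate n (mulLast w.head w.toList)).flatten) = _
    rw [map_one, one_mul, listProd_join_replicate, hz]
  have hwn : (w.prod φ) ^ n =
      of w.head * (listProd φ w.toList * of w.head) ^ n * (of w.head)⁻¹ := by
    rw [← conj_pow, prod_eq_listProd]
    have h2 : of w.head * (listProd φ w.toList * of w.head) * (of w.head)⁻¹ =
        of (G := G) w.head * listProd φ w.toList := by group
    rw [h2]
  have hW1 : W.prod φ = 1 := by
    rw [hWprod]
    rw [hwn] at h1
    have := congr_arg (fun z => (of w.head)⁻¹ * z * of w.head) h1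
    simpa [mul_assoc] using this
  have hnil := HNNExtension.ReducedWord.toList_eq_nil_of_mem_of_range φ W
    ⟨1, by rw [map_one, hW1]⟩
  have hlen : W.toList.length = n * (mulLast w.head w.toList).length := by
    show ((List.replicate n (mulLast w.head w.toList)).flatten).length = _
    simp [List.length_flatten, List.map_replicate, List.sum_replicate, smul_eq_mul]
  rw [hnil] at hlen
  simp only [List.length_nil] at hlen
  rcases Nat.mul_eq_zero.1 hlen.symm with h | h
  · exact hn h
  · exact hne' (List.length_eq_zero_iff.1 h)

theorem units_eq_neg_of_ne {u v : ℤˣ} (h : u ≠ v) : v = -u := by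
  rcases Int.units_eq_one_or u with rfl | rfl <;>
    rcases Int.units_eq_one_or v with rfl | rfl <;> simp_all

theorem exists_isCyclicallyReduced_aux :
    ∀ (k : ℕ) (L : List (ℤˣ × G)), L.length ≤ k → L.Chain' (Rel A B) → ∀ h : G,
    ∃ (x : HNNExtension G A B φ) (w' : ReducedWord G A B), IsCyclicallyReduced w' ∧
      x * w'.prod φ * x⁻¹ = listProd φ L * of h := by
  intro k
  induction k with
  | zero =>
    intro L hlen _ h
    have hnil : L = [] := List.length_eq_zero_iff.1 (Nat.le_zero.1 hlen)
    subst hnil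
    exact ⟨1, ⟨h, [], List.isChain_nil⟩, isCyclicallyReduced_of_nil _ rfl,
      by simp [prod_eq_listProd]⟩
  | succ k ih =>
    intro L hlen hch h
    rcases eq_or_ne L [] with rfl | hLne
    · exact ⟨1, ⟨h, [], List.isChain_nil⟩, isCyclicallyReduced_of_nil _ rfl,
        by simp [prod_eq_listProd]⟩
    have hch₀ : (mulLast h L).Chain' (Rel A B) := chain'_mulLast _ _ hch
    have hne₀ : mulLast h L ≠ [] := mulLast_ne_nil _ hLne
    have hprod₀ : listProd φ (mulLast h L) = listProd φ L * of h := listProd_mulLast φ _ _ hLne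
    by_cases hCR : ∀ a ∈ (mulLast h L).getLast?, ∀ b ∈ (mulLast h L).head?, Rel A B a b
    · refine ⟨1, ⟨1, mulLast h L, hch₀⟩, ?_, by simp [prod_eq_listProd, hprod₀]⟩
      unfold IsCyclicallyReduced
      simp only
      rw [mulLast_one]
      exact hCR
    · push_neg at hCR
      obtain ⟨a, ha, b, hb, hR⟩ := hCR
      obtain ⟨hmem, hne_fst⟩ := hR
      set L₀ := mulLast h L with hL₀def
      have ha' : L₀.getLast hne₀ = a := by
        rw [List.getLast?_eq_getLast hne₀] at ha
        exact Option.some_inj.1 ha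
      have hb' : L₀.head hne₀ = b := by
        rw [List.head?_eq_head hne₀] at hb
        exact Option.some_inj.1 hb
      have hbfst : b.1 = -a.1 := units_eq_neg_of_ne hne_fst
      have hL₀cons : L₀ = b :: L₀.tail := by
        conv_lhs => rw [← List.cons_head_tail (l := L₀) hne₀]
        rw [hb']
      have hM₀ne : L₀.tail ≠ [] := by
        intro hc
        have hsing : L₀ = [b] := by rw [hL₀cons, hc]
        rw [hsing] at ha
        simp only [List.getLast?_singleton, Option.mem_def, Option.some_inj] at ha
        exact hne_fst (by rw [ha])
      obtain ⟨N, c, htail⟩ : ∃ N c, L₀.tail = N ++ [c] := by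
        rcases List.eq_nil_or_concat L₀.tail with hc | ⟨N, c, hc⟩
        · exact absurd hc hM₀ne
        · exact ⟨N, c, by simpa [List.concat_eq_append] using hc⟩
      have hac : c = a := by
        rw [hL₀cons, htail, ← List.cons_append, List.getLast?_concat] at ha
        simpa using ha
      subst hac
      have hchM : L₀.tail.Chain' (Rel A B) := hch₀.tail
      have hchN : N.Chain' (Rel A B) := (List.isChain_append.1 (htail ▸ hchM)).1
      have hlenN : N.length ≤ k := by
        have h1 : L₀.length = L.length := length_mulLast _ _
        have h2 : L₀.length = N.length + 2 := by
          rw [hL₀cons, htail]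
          simp
        omega
      set e : G := (toSubgroupEquiv φ c.1 ⟨c.2, hmem⟩ : G) with he
      have hkey : letter φ c * t ^ (b.1 : ℤ) = of e := by
        show t ^ (c.1 : ℤ) * of c.2 * t ^ (b.1 : ℤ) = of e
        have h3 : (t ^ (c.1 : ℤ) * of c.2 : HNNExtension G A B φ) = of e * t ^ (c.1 : ℤ) :=
          t_zpow_mul_of φ c.1 ⟨c.2, hmem⟩
        rw [h3, hbfst, mul_assoc]
        have h4 : ((-c.1 : ℤˣ) : ℤ) = -(c.1 : ℤ) := by simp
        rw [h4, zpow_neg, mul_inv_cancel, mul_one]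
      obtain ⟨x₂, w', hcyc', heq⟩ := ih N hlenN hchN (e * b.2)
      refine ⟨t ^ (b.1 : ℤ) * of b.2 * x₂, w', hcyc', ?_⟩
      have hsplit : (t ^ (b.1 : ℤ) * of b.2 * x₂) * w'.prod φ *
            (t ^ (b.1 : ℤ) * of b.2 * x₂)⁻¹ =
          t ^ (b.1 : ℤ) * of b.2 * (x₂ * w'.prod φ * x₂⁻¹) * (of b.2)⁻¹ *
            (t ^ (b.1 : ℤ))⁻¹ := by
        group
      rw [hsplit, heq]
      have hexpand : listProd φ L * of h = letter φ b * (listProd φ N * letter φ c) := by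
        rw [← hprod₀]
        conv_lhs => rw [hL₀cons, htail]
        simp [mul_assoc]
      rw [hexpand, map_mul, ← hkey]
      show t ^ (b.1 : ℤ) * of b.2 * (listProd φ N *
          (letter φ c * t ^ (b.1 : ℤ) * of b.2)) * (of b.2)⁻¹ * (t ^ (b.1 : ℤ))⁻¹ =
        t ^ (b.1 : ℤ) * of b.2 * (listProd φ N * letter φ c)
      group

theorem exists_conj_isCyclicallyReduced (g : HNNExtension G A B φ) :
    ∃ (x : HNNExtension G A B φ) (w' : ReducedWord G A B),
      IsCyclicallyReduced w' ∧ x * w'.prod φ * x⁻¹ = g := by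
  rcases TransversalPair.nonempty G A B with ⟨d⟩
  have hw : ((NormalWord.equiv φ d) g).prod φ = g := (NormalWord.equiv φ d).left_inv g
  set w := ((NormalWord.equiv φ d) g) with hwdef
  obtain ⟨x, w', hcyc, heq⟩ := exists_isCyclicallyReduced_aux φ w.toList.length w.toList
    le_rfl w.chain w.head
  refine ⟨of w.head * x, w', hcyc, ?_⟩
  have h1 : of (G := G) w.head * x * w'.prod φ * (of (G := G) w.head * x)⁻¹ =
      of (G := G) w.head * (x * w'.prod φ * x⁻¹) * (of (G := G) w.head)⁻¹ := by group
  rw [h1, heq, ← hw, prod_eq_listProd]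
  group

theorem exists_conj_of_isOfFinOrder {g : HNNExtension G A B φ} (hg : IsOfFinOrder g) :
    ∃ (x : HNNExtension G A B φ) (k : G), g = x * of k * x⁻¹ := by
  obtain ⟨n, hn, hgn⟩ := isOfFinOrder_iff_pow_eq_one.1 hg
  obtain ⟨x, w', hcyc, heq⟩ := exists_conj_isCyclicallyReduced φ g
  rcases eq_or_ne w'.toList [] with hnil | hne
  · refine ⟨x, w'.head, ?_⟩
    rw [← heq, prod_eq_listProd, hnil]
    simp
  · exfalso
    apply pow_ne_one_of_isCyclicallyReduced φ w' hcyc hne (n := n) hn.ne'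
    have h1 : (x * w'.prod φ * x⁻¹) ^ n = 1 := by rw [heq, hgn]
    rw [conj_pow] at h1
    have h2 := congr_arg (fun z => x⁻¹ * z * x) h1
    simpa [mul_assoc] using h2


variable {V : Type u} {Γ : SimpleGraph V}

theorem raag_rel_lift {H : Type*} [Group H] {f : V → H}
    (hf : ∀ u v, Γ.Adj u v → Commute (f u) (f v)) :
    ∀ r ∈ raagRels Γ, FreeGroup.lift f r = 1 := by
  rintro r ⟨u, v, huv, rfl⟩
  simp only [map_mul, map_inv, FreeGroup.lift_apply_of]
  rw [mul_inv_eq_one, mul_inv_eq_iff_eq_mul]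
  exact (hf u v huv).eq

/-- Build a homomorphism out of a RAAG from images of generators that commute along edges. -/
def raagLift {H : Type*} [Group H] (Γ : SimpleGraph V) (f : V → H)
    (hf : ∀ u v, Γ.Adj u v → Commute (f u) (f v)) : RAAG Γ →* H :=
  PresentedGroup.toGroup (raag_rel_lift hf)

@[simp] theorem raagLift_gen {H : Type*} [Group H] (Γ : SimpleGraph V) (f : V → H)
    (hf : ∀ u v, Γ.Adj u v → Commute (f u) (f v)) (u : V) :
    raagLift Γ f hf (raagGen Γ u) = f u :=
  PresentedGroup.toGroup.of _

theorem raag_commute {u v : V} (h : Γ.Adj u v) :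
    Commute (raagGen Γ u) (raagGen Γ v) := by
  have hr : (FreeGroup.of u * FreeGroup.of v * (FreeGroup.of u)⁻¹ * (FreeGroup.of v)⁻¹)
      ∈ raagRels Γ := ⟨u, v, h, rfl⟩
  have h1 : PresentedGroup.mk (raagRels Γ)
      (FreeGroup.of u * FreeGroup.of v * (FreeGroup.of u)⁻¹ * (FreeGroup.of v)⁻¹) = 1 :=
    (QuotientGroup.eq_one_iff _).2 (Subgroup.subset_normalClosure hr)
  simp only [map_mul, map_inv] at h1
  rw [mul_inv_eq_one, mul_inv_eq_iff_eq_mul] at h1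
  exact h1

theorem raag_pow_ne_one_finite :
    ∀ (n : ℕ) (W : Type u) (_ : Fintype W) (Γ : SimpleGraph W) (g : RAAG Γ),
      Fintype.card W = n → g ≠ 1 → ∀ m : ℕ, m ≠ 0 → g ^ m ≠ 1 := by
  intro n
  induction n with
  | zero =>
    intro W _ Γ g hcard hg m _
    exfalso
    apply hg
    have hE : IsEmpty W := Fintype.card_eq_zero_iff.1 hcard
    have := PresentedGroup.generated_by (raagRels Γ) ⊥ (fun j => hE.elim j) g
    simpa using this
  | succ n ih =>
    intro W _ Γ g hcard hg m hm hgm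
    classical
    have hne : Nonempty W := Fintype.card_pos_iff.1 (by omega)
    obtain ⟨v⟩ := hne
    let V' := {u : W // u ≠ v}
    let Γ' : SimpleGraph V' := Γ.comap Subtype.val
    have hcard' : Fintype.card V' = n := by
      have h2 := Fintype.card_subtype_compl (fun u : W => u = v)
      have h1 : Fintype.card {u : W // u = v} = 1 := Fintype.card_subtype_eq v
      have h3 : Fintype.card V' = Fintype.card {u : W // ¬ u = v} := rfl
      omega
    let K : Subgroup (RAAG Γ') :=
      Subgroup.closure {x | ∃ u' : V', Γ.Adj v ↑u' ∧ x = raagGen Γ' u'}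
    let φ : K ≃* K := MulEquiv.refl K
    -- commuting of `t` with elements of `K`
    have hTK : ∀ a : K, Commute (HNNExtension.t (φ := φ))
        (HNNExtension.of (a : RAAG Γ')) := by
      intro a
      have h4 := HNNExtension.t_mul_of (φ := φ) a
      exact h4
    -- the map RAAG Γ → HNN
    have hfcomm : ∀ u₁ u₂, Γ.Adj u₁ u₂ →
        Commute ((fun u => if h : u = v then HNNExtension.t (φ := φ)
            else HNNExtension.of (raagGen Γ' ⟨u, h⟩)) u₁)
          ((fun u => if h : u = v then HNNExtension.t (φ := φ)
            else HNNExtension.of (raagGen Γ' ⟨u, h⟩)) u₂) := by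
      intro u₁ u₂ hadj
      dsimp only
      by_cases h1 : u₁ = v <;> by_cases h2 : u₂ = v
      · subst h1; subst h2; exact absurd hadj (Γ.irrefl)
      · rw [dif_pos h1, dif_neg h2]
        exact hTK ⟨raagGen Γ' ⟨u₂, h2⟩,
          Subgroup.subset_closure ⟨⟨u₂, h2⟩, h1 ▸ hadj, rfl⟩⟩
      · rw [dif_neg h1, dif_pos h2]
        exact (hTK ⟨raagGen Γ' ⟨u₁, h1⟩,
          Subgroup.subset_closure ⟨⟨u₁, h1⟩, h2 ▸ hadj.symm, rfl⟩⟩).symm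
      · rw [dif_neg h1, dif_neg h2]
        exact (raag_commute (show Γ'.Adj ⟨u₁, h1⟩ ⟨u₂, h2⟩ from hadj)).map _
    let fmap : RAAG Γ →* HNNExtension (RAAG Γ') K K φ := raagLift Γ _ hfcomm
    -- the map RAAG Γ' → RAAG Γ
    let ι : RAAG Γ' →* RAAG Γ :=
      raagLift Γ' (fun u' => raagGen Γ ↑u') (fun a b h => raag_commute h)
    -- the map HNN → RAAG Γ
    have hsc : ∀ a : K, raagGen Γ v * ι ↑a = ι ↑(φ a) * raagGen Γ v := by
      intro a
      show raagGen Γ v * ι ↑a = ι ↑a * raagGen Γ v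
      obtain ⟨x, hx⟩ := a
      refine Subgroup.closure_induction
        (p := fun y _ => raagGen Γ v * ι y = ι y * raagGen Γ v) ?_ ?_ ?_ ?_ hx
      · rintro y ⟨u', hadj, rfl⟩
        rw [raagLift_gen]
        exact raag_commute hadj
      · simp
      · intro y z _ _ hy hz
        rw [map_mul, ← mul_assoc, hy, mul_assoc, hz, mul_assoc]
      · intro y _ hy
        rw [map_inv]
        exact (Commute.inv_right hy)
    let s : HNNExtension (RAAG Γ') K K φ →* RAAG Γ :=
      HNNExtension.lift ι (raagGen Γ v) hsc
    have hsf : ∀ x : RAAG Γ, s (fmap x) = x := by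
      have hcomp : s.comp fmap = MonoidHom.id (RAAG Γ) := by
        refine PresentedGroup.ext fun u => ?_
        show s (fmap (raagGen Γ u)) = raagGen Γ u
        rw [show fmap (raagGen Γ u) = _ from raagLift_gen Γ _ hfcomm u]
        by_cases h : u = v
        · rw [dif_pos h, HNNExtension.lift_t]
          rw [h]
        · rw [dif_neg h, HNNExtension.lift_of]
          exact raagLift_gen _ _ _ _
      intro x
      exact DFunLike.congr_fun hcomp x
    -- transfer finite order
    have hford : IsOfFinOrder (fmap g) :=
      isOfFinOrder_iff_pow_eq_one.2 ⟨m, Nat.pos_of_ne_zero hm,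
        by rw [← map_pow, hgm, map_one]⟩
    obtain ⟨x, k, hconj⟩ := exists_conj_of_isOfFinOrder φ hford
    have hk1 : k ≠ 1 := by
      rintro rfl
      apply hg
      have hf1 : fmap g = 1 := by rw [hconj, map_one]; group
      rw [← hsf g, hf1, map_one]
    have hkm : k ^ m = 1 := by
      apply HNNExtension.of_injective (φ := φ)
      rw [map_pow, map_one]
      have hofk : HNNExtension.of (φ := φ) k = x⁻¹ * fmap g * x := by
        rw [hconj]; group
      rw [hofk]
      have h5 : (x⁻¹ * fmap g * x) ^ m = x⁻¹ * (fmap g) ^ m * x := by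
        have h6 := conj_pow (a := x⁻¹) (b := fmap g) (i := m)
        simpa [inv_inv] using h6
      rw [h5, ← map_pow, hgm, map_one, mul_one, inv_mul_cancel]
    exact ih V' inferInstance Γ' k hcard' hk1 m hm hkm

end RaagAux

open RaagAux in
/-- Right-angled Artin groups are torsion-free: every non-trivial element has
infinite order. -/
theorem raag_torsion_free {V : Type u} (Γ : SimpleGraph V) (g : RAAG Γ) (hg : g ≠ 1) :
    ¬ IsOfFinOrder g := by
  intro hfin
  obtain ⟨m, hm0, hgm⟩ := isOfFinOrder_iff_pow_eq_one.1 hfin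
  classical
  have htop : g ∈ Subgroup.closure (Set.range (raagGen Γ)) := by
    have h1 : Subgroup.closure (Set.range (raagGen Γ)) = ⊤ :=
      PresentedGroup.closure_range_of (raagRels Γ)
    rw [h1]
    trivial
  have hS : ∃ S : Finset V, g ∈ Subgroup.closure (raagGen Γ '' ↑S) := by
    refine Subgroup.closure_induction ?_ ?_ ?_ ?_ htop
    · rintro x ⟨u, rfl⟩
      exact ⟨{u}, Subgroup.subset_closure ⟨u, by simp, rfl⟩⟩
    · exact ⟨∅, one_mem _⟩
    · rintro x y _ _ ⟨S₁, h₁⟩ ⟨S₂, h₂⟩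
      refine ⟨S₁ ∪ S₂, mul_mem ?_ ?_⟩
      · exact Subgroup.closure_mono (Set.image_mono (by simp)) h₁
      · exact Subgroup.closure_mono (Set.image_mono (by simp)) h₂
    · rintro x _ ⟨S, h⟩
      exact ⟨S, inv_mem h⟩
  obtain ⟨S, hgS⟩ := hS
  let V'' := {u : V // u ∈ S}
  let Γ'' : SimpleGraph V'' := Γ.comap Subtype.val
  let ι : RAAG Γ'' →* RAAG Γ :=
    raagLift Γ'' (fun u => raagGen Γ ↑u) (fun a b h => raag_commute h)
  have hρcomm : ∀ u₁ u₂, Γ.Adj u₁ u₂ →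
      Commute ((fun u => if h : u ∈ S then raagGen Γ'' ⟨u, h⟩ else 1) u₁)
        ((fun u => if h : u ∈ S then raagGen Γ'' ⟨u, h⟩ else 1) u₂) := by
    intro u₁ u₂ hadj
    dsimp only
    by_cases h1 : u₁ ∈ S <;> by_cases h2 : u₂ ∈ S
    · rw [dif_pos h1, dif_pos h2]
      exact raag_commute (show Γ''.Adj ⟨u₁, h1⟩ ⟨u₂, h2⟩ from hadj)
    · rw [dif_neg h2]; exact Commute.one_right _
    · rw [dif_neg h1]; exact Commute.one_left _
    · rw [dif_neg h1]; exact Commute.one_left _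
  let ρ : RAAG Γ →* RAAG Γ'' := raagLift Γ _ hρcomm
  have hρι : ∀ y : RAAG Γ'', ρ (ι y) = y := by
    have hcomp : ρ.comp ι = MonoidHom.id (RAAG Γ'') := by
      refine PresentedGroup.ext fun u => ?_
      show ρ (ι (raagGen Γ'' u)) = raagGen Γ'' u
      rw [show ι (raagGen Γ'' u) = raagGen Γ ↑u from raagLift_gen _ _ _ u,
        show ρ (raagGen Γ ↑u) = _ from raagLift_gen _ _ hρcomm ↑u, dif_pos u.2]
    intro y
    exact DFunLike.congr_fun hcomp y
  have hrange : g ∈ ι.range := by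
    refine (Subgroup.closure_le _).2 ?_ hgS
    rintro x ⟨u, hu, rfl⟩
    exact ⟨raagGen Γ'' ⟨u, hu⟩, raagLift_gen _ _ _ _⟩
  obtain ⟨g'', hg''⟩ := hrange
  have hg''ne : g'' ≠ 1 := fun h => hg (by rw [← hg'', h, map_one])
  have hg''m : g'' ^ m = 1 := by
    have h7 : ι (g'' ^ m) = 1 := by rw [map_pow, hg'', hgm]
    calc g'' ^ m = ρ (ι (g'' ^ m)) := (hρι _).symm
    _ = 1 := by rw [h7, map_one]
  exact raag_pow_ne_one_finite (Fintype.card V'') V'' inferInstance Γ'' g'' rfl hg''ne m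
    hm0.ne' hg''m
end
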